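/- arXiv:1210.3075 — 2 statements merged into one kernel-verified Lean document; each statement's English description precedes it below -/
import Mathlib

section
/- If a binary n×k matrix M (n ≥ k) has the assignment property, and l_max denotes the maximal number of ones in any row of M, then n · l_max ≥ k(n−k+1). -/
/-- Assignment property of a binary n×k matrix (entries in Bool): for every
choice of k distinct rows there is a system of distinct column indices with
ones at the corresponding positions. -/
def AssignProp {n k : ℕ} (M : Fin n → Fin k → Bool) : Prop :=
  ∀ σ : Fin k → Fin n, Function.Injective σ →
    ∃ π : Equiv.Perm (Fin k), ∀ t : Fin k, M (σ t) (π t) = true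

/-!
Every column of a matrix with the assignment property has fewer than `k` zeros: otherwise the
rows of `k` of its zeros admit no assignment, since some row would have to be matched to that
column. So every column has at least `n - k + 1` ones, and counting the ones of `M` by columns
and by rows gives `k (n - k + 1) ≤ n l_max`.
-/

open Finset

namespace AssignProp

variable {n k : ℕ} {M : Fin n → Fin k → Bool}

theorem card_zeros_lt (hM : AssignProp M) (j : Fin k) : #{i | M i j = false} < k := by
  by_contra! hk
  set zeros : Finset (Fin n) := {i | M i j = false}
  obtain ⟨π, hπ⟩ := hM (zeros.orderEmbOfCardLe hk) (zeros.orderEmbOfCardLe hk).injective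
  have hzero := zeros.orderEmbOfCardLe_mem hk (π.symm j)
  have hone := hπ (π.symm j)
  rw [Equiv.apply_symm_apply] at hone
  simp [zeros, hone] at hzero

theorem sub_add_one_le_card_ones (hM : AssignProp M) (hkn : k ≤ n) (j : Fin k) :
    n - k + 1 ≤ #{i | M i j = true} := by
  have hsplit := card_filter_add_card_filter_not (s := univ) (p := fun i => M i j = true)
  simp only [Bool.not_eq_true, card_univ, Fintype.card_fin] at hsplit
  have := hM.card_zeros_lt j
  omega

end AssignProp

theorem assign_lmax {n k : ℕ} (hnk : k ≤ n) (M : Fin n → Fin k → Bool)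
    (hM : AssignProp M) :
    k * (n - k + 1) ≤
      n * (Finset.univ.sup
        (fun i : Fin n => (Finset.univ.filter (fun j : Fin k => M i j = true)).card)) := by
  simpa using card_mul_le_card_mul' (fun i j => M i j = true) (s := univ) (t := univ)
    (fun j _ => hM.sub_add_one_le_card_ones hnk j) (fun i _ => le_sup (f := fun i => #{j | M i j = true}) (mem_univ i))
end

section
/- Let k ≥ 4 be even, l = k/2, n = 2(k−1), and let M be the augmented l-banded n×k matrix: M = [M' b] where M' is the 2(k−1)×(k−1) l-banded matrix (with M'_{i,j} = 1 iff (j − i) mod (k−1) < l) and b is the column whose first k−1 entries are 0 and last k−1 entries are 1. Then M has the assignment property. -/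
/-- The augmented l-banded 2(k-1)×k matrix: the first k-1 columns form the
l-banded matrix modulo k-1, the last column has ones exactly in rows ≥ k-1. -/
def augBanded (k l : ℕ) (i : Fin (2*(k-1))) (j : Fin k) : Bool :=
  if (j : ℕ) < k - 1 then
    decide ((((j : ℕ) : ℤ) - ((i : ℕ) : ℤ)) % ((k : ℤ) - 1) < (l : ℤ))
  else
    decide (k - 1 ≤ (i : ℕ))

open Finset

namespace ZMod

variable {n : ℕ}

theorem mem_of_add_one_mem [NeZero n] {A : Finset (ZMod n)} {a : ZMod n} (ha : a ∈ A)
    (h : ∀ x ∈ A, x + 1 ∈ A) (x : ZMod n) : x ∈ A := by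
  have hshift : ∀ m : ℕ, a + m ∈ A := by
    intro m
    induction m with
    | zero => simpa using ha
    | succ m ih => simpa [add_assoc] using h _ ih
  simpa [natCast_zmod_val] using hshift (x - a).val

theorem card_lt_card_union_image_add_one [NeZero n] {A : Finset (ZMod n)} (hA : A.Nonempty)
    (hlt : A.card < n) : A.card < (A ∪ A.image (· + 1)).card := by
  obtain ⟨a, ha⟩ := hA
  refine card_lt_card <|
    Finset.ssubset_iff_subset_ne.mpr ⟨subset_union_left, fun hEq => hlt.ne ?_⟩
  have hclosed : ∀ x ∈ A, x + 1 ∈ A := fun x hx => by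
    rw [hEq]; exact mem_union_right _ (mem_image_of_mem _ hx)
  rw [eq_univ_of_forall (mem_of_add_one_mem ha hclosed), card_univ, ZMod.card]

/-- `thicken m A = A + {0, 1, …, m}`. -/
def thicken : ℕ → Finset (ZMod n) → Finset (ZMod n)
  | 0, A => A
  | m + 1, A => thicken m A ∪ (thicken m A).image (· + 1)

theorem thicken_nonempty {A : Finset (ZMod n)} (hA : A.Nonempty) (m : ℕ) :
    (thicken m A).Nonempty := by
  induction m with
  | zero => exact hA
  | succ m ih => exact ih.mono subset_union_left

theorem min_le_card_thicken [NeZero n] {A : Finset (ZMod n)} (hA : A.Nonempty) (m : ℕ) :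
    min n (A.card + m) ≤ (thicken m A).card := by
  induction m with
  | zero => exact min_le_right _ _
  | succ m ih =>
    have hmono : (thicken m A).card ≤ (thicken (m + 1) A).card := card_le_card subset_union_left
    by_cases hlt : (thicken m A).card < n
    · have := card_lt_card_union_image_add_one (thicken_nonempty hA m) hlt
      simp only [thicken] at hmono ⊢
      omega
    · omega

theorem exists_sub_val_le_of_mem_thicken {A : Finset (ZMod n)} {m : ℕ} {x : ZMod n}
    (hx : x ∈ thicken m A) : ∃ a ∈ A, (x - a).val ≤ m := by
  induction m generalizing x with
  | zero => exact ⟨x, hx, by simp⟩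
  | succ m ih =>
    rcases mem_union.mp hx with hx | hx
    · obtain ⟨a, ha, hle⟩ := ih hx
      exact ⟨a, ha, by omega⟩
    · obtain ⟨y, hy, rfl⟩ := mem_image.mp hx
      obtain ⟨a, ha, hle⟩ := ih hy
      refine ⟨a, ha, ?_⟩
      have hone : (1 : ZMod n).val ≤ 1 := by
        rw [val_one_eq_one_mod]; exact Nat.mod_le 1 n
      calc (y + 1 - a).val = (y - a + 1).val := by rw [sub_add_eq_add_sub]
        _ ≤ (y - a).val + (1 : ZMod n).val := val_add_le _ _
        _ ≤ m + 1 := by omega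

end ZMod

theorem card_le_mul_card_image_natCast {q n : ℕ} (T : Finset (Fin (q * n))) :
    T.card ≤ q * (T.image fun i : Fin (q * n) => ((i : ℕ) : ZMod n)).card := by
  set R := T.image fun i : Fin (q * n) => ((i : ℕ) : ZMod n)
  calc T.card ≤ (R ×ˢ range q).card := ?_
    _ = q * R.card := by rw [card_product, card_range, mul_comm]
  refine card_le_card_of_injOn (fun i => (((i : ℕ) : ZMod n), (i : ℕ) / n)) ?_ ?_
  · intro i hi
    simp only [coe_product, Set.mem_prod, mem_coe, coe_range, Set.mem_Iio]
    exact ⟨mem_image_of_mem _ hi, Nat.div_lt_of_lt_mul (by linarith [i.isLt, mul_comm q n])⟩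
  · intro i _ j _ hij
    obtain ⟨hmod, hdiv⟩ := Prod.ext_iff.mp hij
    have hmod' : (i : ℕ) % n = (j : ℕ) % n := by
      simpa only [ZMod.val_natCast] using congrArg ZMod.val hmod
    apply Fin.ext
    rw [← Nat.mod_add_div (i : ℕ) n, ← Nat.mod_add_div (j : ℕ) n, hmod']
    exact congrArg _ (congrArg _ hdiv)

theorem exists_mem_le_val_of_lt_card {m r : ℕ} {T : Finset (Fin m)} (hT : r < T.card) :
    ∃ i ∈ T, r ≤ (i : ℕ) := by
  by_contra! hlow
  have : T.card ≤ (range r).card :=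
    card_le_card_of_injOn Fin.val (fun i hi => mem_range.mpr (hlow i hi))
      Fin.val_injective.injOn
  rw [card_range] at this
  omega

def rowSupport {n k : ℕ} (M : Fin n → Fin k → Bool) (i : Fin n) : Finset (Fin k) :=
  univ.filter fun j => M i j = true

theorem assignProp_of_forall_card_le_card_biUnion {n k : ℕ} (M : Fin n → Fin k → Bool)
    (hHall : ∀ T : Finset (Fin n), T.card ≤ k → T.card ≤ (T.biUnion (rowSupport M)).card) :
    AssignProp M := by
  intro σ hσ
  have hHall' : ∀ S : Finset (Fin k),
      S.card ≤ (S.biUnion fun t => rowSupport M (σ t)).card := by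
    intro S
    have hS : (S.image σ).card = S.card := card_image_of_injective S hσ
    have := hHall _ (hS.trans_le (card_le_univ S |>.trans_eq (Fintype.card_fin k)))
    rwa [image_biUnion, hS] at this
  obtain ⟨f, hf, hfM⟩ := (all_card_le_biUnion_card_iff_exists_injective _).mp hHall'
  refine ⟨Equiv.ofBijective f (Finite.injective_iff_bijective.mp hf), fun t => ?_⟩
  simpa [rowSupport] using hfM t

section AugBanded

variable {k : ℕ}

def bandCol [NeZero (k - 1)] (z : ZMod (k - 1)) : Fin k :=
  ⟨z.val, by have := z.val_lt; omega⟩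

theorem bandCol_injective [NeZero (k - 1)] : Function.Injective (bandCol (k := k)) :=
  fun _ _ h => ZMod.val_injective _ (congrArg Fin.val h)

theorem bandCol_ne_last [NeZero (k - 1)] (z : ZMod (k - 1)) (h : k - 1 < k) :
    bandCol z ≠ ⟨k - 1, h⟩ :=
  fun hz => z.val_lt.ne (congrArg Fin.val hz)

theorem augBanded_bandCol [NeZero (k - 1)] (l : ℕ) (i : Fin (2 * (k - 1))) (z : ZMod (k - 1)) :
    augBanded k l i (bandCol z) = true ↔ (z - ((i : ℕ) : ZMod (k - 1))).val < l := by
  have hk : 1 ≤ k := by have := NeZero.ne (k - 1); omega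
  have hcast :
      (((z.val : ℤ) - (i : ℕ) : ℤ) : ZMod (k - 1)) = z - ((i : ℕ) : ZMod (k - 1)) := by
    push_cast [ZMod.natCast_zmod_val]; rfl
  have hval := ZMod.val_intCast (n := k - 1) ((z.val : ℤ) - (i : ℕ))
  rw [hcast, Nat.cast_sub hk, Nat.cast_one] at hval
  rw [augBanded, if_pos (show (bandCol z : ℕ) < k - 1 from z.val_lt), decide_eq_true_iff]
  change ((z.val : ℤ) - (i : ℕ)) % ((k : ℤ) - 1) < l ↔ _
  rw [← hval]
  exact_mod_cast Iff.rfl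

theorem augBanded_last (l : ℕ) (i : Fin (2 * (k - 1))) (h : k - 1 < k) :
    augBanded k l i ⟨k - 1, h⟩ = true ↔ k - 1 ≤ (i : ℕ) := by
  simp [augBanded]

theorem image_bandCol_thicken_subset [NeZero (k - 1)] {l : ℕ} (hl : 0 < l)
    (T : Finset (Fin (2 * (k - 1)))) :
    (ZMod.thicken (l - 1) (T.image fun i : Fin (2 * (k - 1)) => ((i : ℕ) : ZMod (k - 1)))).image
      bandCol ⊆ T.biUnion (rowSupport (augBanded k l)) := by
  intro j hj
  obtain ⟨z, hz, rfl⟩ := mem_image.mp hj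
  obtain ⟨r, hr, hle⟩ := ZMod.exists_sub_val_le_of_mem_thicken hz
  obtain ⟨i, hi, rfl⟩ := mem_image.mp hr
  simp only [mem_biUnion, rowSupport, mem_filter, mem_univ, true_and, augBanded_bandCol]
  exact ⟨i, hi, by omega⟩

theorem card_le_card_biUnion_rowSupport_augBanded [NeZero (k - 1)] {l : ℕ} (hkl : k ≤ 2 * l)
    (T : Finset (Fin (2 * (k - 1)))) (hT : T.card ≤ k) :
    T.card ≤ (T.biUnion (rowSupport (augBanded k l))).card := by
  have hk : 2 ≤ k := by have := NeZero.ne (k - 1); omega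
  rcases T.eq_empty_or_nonempty with rfl | hTne
  · simp
  set R := T.image fun i : Fin (2 * (k - 1)) => ((i : ℕ) : ZMod (k - 1))
  set N := T.biUnion (rowSupport (augBanded k l))
  set G := (ZMod.thicken (l - 1) R).image bandCol
  have hTR : T.card ≤ 2 * R.card := card_le_mul_card_image_natCast T
  have hG : min (k - 1) (R.card + (l - 1)) ≤ G.card := by
    rw [card_image_of_injective _ bandCol_injective]
    exact ZMod.min_le_card_thicken (hTne.image _) _
  have hGN : G ⊆ N := image_bandCol_thicken_subset (by omega) T
  by_cases hTk : T.card ≤ k - 1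
  · have := card_le_card hGN
    omega
  · have hlast : (⟨k - 1, by omega⟩ : Fin k) ∈ N := by
      obtain ⟨i, hi, hhigh⟩ := exists_mem_le_val_of_lt_card (by omega : k - 1 < T.card)
      simp only [N, mem_biUnion, rowSupport, mem_filter, mem_univ, true_and, augBanded_last]
      exact ⟨i, hi, hhigh⟩
    have hnotin : (⟨k - 1, by omega⟩ : Fin k) ∉ G := by
      simp only [G, mem_image, not_exists, not_and]
      exact fun z _ => bandCol_ne_last z _
    have := card_le_card (insert_subset hlast hGN)
    rw [card_insert_of_notMem hnotin] at this
    omega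

end AugBanded

theorem augBanded_assign {k : ℕ} (hk : 4 ≤ k) (heven : Even k) :
    AssignProp (augBanded k (k / 2)) := by
  have : NeZero (k - 1) := ⟨by omega⟩
  exact assignProp_of_forall_card_le_card_biUnion _
    (card_le_card_biUnion_rowSupport_augBanded (Nat.two_mul_div_two_of_even heven).ge)
end
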